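/- Let Γ be a finite connected simplicial graph with no SIL whose vertices are labeled by nontrivial cyclic groups, and let G_Γ be the associated graph product. Fix an enumeration v₁, …, v_n of the vertex set and, for each i and each connected component C of Γ∖st(v_i), an integer k_{v_i,C}. Then the automorphism ∏_{i=1}^{n} ∏_{C} π_{v_i,C}^{k_{v_i,C}} of G_Γ is an inner automorphism if and only if for each i the exponents k_{v_i,C} are congruent modulo the order of G_{v_i} for all connected components C of Γ∖st(v_i) (where for infinite cyclic G_{v_i} this means the exponents are equal). -/

import Mathlib

open Monoid

namespace ArXiv

universe u uG

variable {V : Type u}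

/-- The star of a vertex: the vertex together with its neighbors. -/
def star (Γ : SimpleGraph V) (v : V) : Set V := insert v (Γ.neighborSet v)

/-- `C ⊆ V` is the vertex set of a connected component of the full subgraph of `Γ`
induced on `S`. -/
def IsCompOf (Γ : SimpleGraph V) (S : Set V) (C : Set V) : Prop :=
  ∃ c : (Γ.induce S).ConnectedComponent, C = Subtype.val '' c.supp

/-- `Γ` has a separating intersection of links: there are distinct non-adjacent vertices
`v, w` such that some connected component of `Γ ∖ (lk(v) ∩ lk(w))` contains neither `v`
nor `w`. -/
def HasSIL (Γ : SimpleGraph V) : Prop :=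
  ∃ v w : V, v ≠ w ∧ ¬ Γ.Adj v w ∧
    ∃ C : Set V, IsCompOf Γ ((Γ.neighborSet v ∩ Γ.neighborSet w)ᶜ) C ∧ v ∉ C ∧ w ∉ C

variable (Γ : SimpleGraph V) (G : V → Type uG) [∀ v, Group (G v)]

/-- The commutator relators defining the graph product. -/
def rels : Set (Monoid.CoprodI G) :=
  {x | ∃ (v w : V) (_ : Γ.Adj v w) (g : G v) (h : G w),
    x = CoprodI.of g * CoprodI.of h * (CoprodI.of g)⁻¹ * (CoprodI.of h)⁻¹}

/-- The graph product of the vertex groups `G v` over the graph `Γ`: the quotient of the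
free product by the normal closure of the commutators of adjacent vertex groups. -/
def GraphProduct : Type (max u uG) :=
  Monoid.CoprodI G ⧸ Subgroup.normalClosure (rels Γ G)

instance : Group (GraphProduct Γ G) :=
  inferInstanceAs (Group (Monoid.CoprodI G ⧸ Subgroup.normalClosure (rels Γ G)))

/-- The canonical map from a vertex group into the graph product. -/
def of {v : V} : G v →* GraphProduct Γ G :=
  (QuotientGroup.mk' (Subgroup.normalClosure (rels Γ G))).comp CoprodI.of

theorem of_commute {v w : V} (h : Γ.Adj v w) (g : G v) (k : G w) :
    Commute (of Γ G g) (of Γ G k) := by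
  rw [← commutatorElement_eq_one_iff_commute]
  have hmem : (CoprodI.of g * CoprodI.of k * (CoprodI.of g)⁻¹ * (CoprodI.of k)⁻¹ :
      Monoid.CoprodI G) ∈ Subgroup.normalClosure (rels Γ G) :=
    Subgroup.subset_normalClosure ⟨v, w, h, g, k, rfl⟩
  have h1 : (QuotientGroup.mk' (Subgroup.normalClosure (rels Γ G)))
      (CoprodI.of g * CoprodI.of k * (CoprodI.of g)⁻¹ * (CoprodI.of k)⁻¹) = 1 :=
    (QuotientGroup.eq_one_iff _).mpr hmem
  simp only [map_mul, map_inv] at h1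
  rw [commutatorElement_def]
  exact h1

/-- `π` is the partial conjugation `π_{v,C}`, for vertex groups with chosen generators
`gen`: it conjugates the generators in `C` by (the generator of) `v` and fixes all other
generators. -/
def IsPartialConj (gen : ∀ v, G v) (π : MulAut (GraphProduct Γ G)) (v : V) (C : Set V) :
    Prop :=
  (∀ u ∈ C, ∀ g : G u, π (of Γ G g) = of Γ G (gen v) * of Γ G g * (of Γ G (gen v))⁻¹) ∧
  (∀ u ∉ C, ∀ g : G u, π (of Γ G g) = of Γ G g)

/-- `π` is the partial conjugation `π_{a,C}` by the element `a` of the vertex group `G v`: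
it conjugates the vertex groups in `C` by `a` and fixes all other vertex groups. -/
def IsPartialConjBy {v : V} (a : G v) (π : MulAut (GraphProduct Γ G)) (C : Set V) : Prop :=
  (∀ u ∈ C, ∀ g : G u, π (of Γ G g) = of Γ G a * of Γ G g * (of Γ G a)⁻¹) ∧
  (∀ u ∉ C, ∀ g : G u, π (of Γ G g) = of Γ G g)

/-- The vertex set of the graph `Γ̃`: pairs `p_{v,C}` where `C` is a connected component
of `Γ ∖ st(v)`. -/
def TV : Type u := {p : V × Set V // IsCompOf Γ ((star Γ p.1)ᶜ) p.2}

/-- The graph `Γ̃`: vertices `p_{v,C}` and `p_{w,D}` are joined by an edge unless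
`v, w` are distinct non-adjacent vertices with `v ∈ D` and `w ∈ C`. -/
def tilde : SimpleGraph (TV Γ) where
  Adj p q := p ≠ q ∧
    ¬(p.1.1 ≠ q.1.1 ∧ ¬ Γ.Adj p.1.1 q.1.1 ∧ p.1.1 ∈ q.1.2 ∧ q.1.1 ∈ p.1.2)
  symm := ⟨by
    rintro p q ⟨h1, h2⟩
    exact ⟨h1.symm, fun ⟨a, b, c, d⟩ => h2 ⟨a.symm, fun e => b e.symm, d, c⟩⟩⟩
  loopless := ⟨fun p h => h.1 rfl⟩

/-- The graph product `G_{Γ̃}`, where the vertex `p_{v,C}` is labeled by (a copy of) the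
group `G v`. -/
abbrev TildeProduct : Type (max u uG) :=
  GraphProduct (tilde Γ) (fun p : TV Γ => G p.1.1)

/-- The element `p_v = ∏_C p_{v,C} ∈ G_{Γ̃}`, the product over all connected components
`C` of `Γ ∖ st(v)` (the factors pairwise commute). -/
noncomputable def pvert [Finite V] (gen : ∀ v, G v) (v : V) : TildeProduct Γ G :=
  haveI : Fintype {C : Set V // IsCompOf Γ ((star Γ v)ᶜ) C} := Fintype.ofFinite _
  Finset.noncommProd (Finset.univ : Finset {C : Set V // IsCompOf Γ ((star Γ v)ᶜ) C})
    (fun c => of (tilde Γ) (fun p : TV Γ => G p.1.1) (v := ⟨(v, c.1), c.2⟩) (gen v))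
    (by
      intro a _ b _ hab
      have hadj : (tilde Γ).Adj ⟨(v, a.1), a.2⟩ ⟨(v, b.1), b.2⟩ := by
        show _ ∧ _
        refine ⟨fun h => hab (Subtype.ext (congrArg (fun x : TV Γ => x.1.2) h)), ?_⟩
        rintro ⟨hne, -⟩
        exact hne rfl
      exact of_commute (tilde Γ) (fun p : TV Γ => G p.1.1) hadj (gen v) (gen v))

/-- The set `Δ` of vertices adjacent to every other vertex of `Γ`. -/
def Delta (Γ : SimpleGraph V) : Set V := {v | ∀ u, u ≠ v → Γ.Adj v u}

/-- The subgroup of the graph product generated by the vertex groups `G v`, `v ∈ T`. -/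
def vertexSubgroup (T : Set V) : Subgroup (GraphProduct Γ G) :=
  Subgroup.closure {x | ∃ v ∈ T, ∃ g : G v, x = of Γ G g}

/-- `w` is a reduced word for the element `g` of the graph product: a minimal length
expression of `g` as a product of nontrivial elements of vertex groups. -/
def IsReducedWord (g : GraphProduct Γ G) (w : List (Σ v : V, G v)) : Prop :=
  (w.map fun l => of Γ G l.2).prod = g ∧ (∀ l ∈ w, l.2 ≠ 1) ∧
    ∀ w' : List (Σ v : V, G v), (w'.map fun l => of Γ G l.2).prod = g →
      w.length ≤ w'.length


/-!
A power `π_{v,C} ^ k` of a partial conjugation is the partial conjugation of `C` by `v ^ k`.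

Suppose the product is conjugation by `z`, and fix `(v, C)` and `u ∈ C`. Since `u ∉ st(v)`, the
graph product retracts onto the wreath product `G_u ≀ G_v`, where every factor of the product
becomes an inner automorphism; its conjugator has `G_v`-coordinate `v ^ k_{v,C}` for the factor
`(v, C)` and `1` for all others. Conjugation by the image of `z` and by the product of these
conjugators agree on a nontrivial element of the base group at `1`, whose centraliser has trivial
`G_v`-coordinate. Hence the `G_v`-coordinate of `z` is `v ^ k_{v,C}`, whatever `C` is.

Conversely, if the exponents at `v` agree modulo `|G_v|`, the consecutive factors at `v` conjugate
the disjoint components of `Γ ∖ st(v)` by one element `a`. Together they conjugate all of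
`Γ ∖ st(v)` by `a`, and as `a` commutes with `G_w` for `w ∈ st(v)`, this is conjugation by `a`.
-/

theorem commute_of_zpowers_eq_top {H : Type*} [Group H] {g : H}
    (hg : Subgroup.zpowers g = ⊤) (x y : H) : Commute x y := by
  obtain ⟨m, rfl⟩ := Subgroup.mem_zpowers_iff.mp (hg ▸ Subgroup.mem_top x)
  obtain ⟨n, rfl⟩ := Subgroup.mem_zpowers_iff.mp (hg ▸ Subgroup.mem_top y)
  exact (Commute.refl g).zpow_zpow m n

theorem zpow_eq_zpow_iff_modEq_card {H : Type*} [Group H] {g : H}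
    (hg : Subgroup.zpowers g = ⊤) {m n : ℤ} : g ^ m = g ^ n ↔ m ≡ n [ZMOD Nat.card H] := by
  rw [zpow_eq_zpow_iff_modEq, orderOf_eq_card_of_zpowers_eq_top hg]

namespace GraphProduct

variable {Γ : SimpleGraph V} {G : V → Type uG} [∀ v, Group (G v)]

theorem hom_ext {K : Type*} [Monoid K] {f g : GraphProduct Γ G →* K}
    (h : ∀ (v : V) (x : G v), f (of Γ G x) = g (of Γ G x)) : f = g :=
  QuotientGroup.monoidHom_ext _ <| CoprodI.ext_hom _ _ fun v => MonoidHom.ext (h v)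

theorem mulAut_ext {e₁ e₂ : MulAut (GraphProduct Γ G)}
    (h : ∀ (v : V) (x : G v), e₁ (of Γ G x) = e₂ (of Γ G x)) : e₁ = e₂ :=
  MulEquiv.toMonoidHom_injective (hom_ext h)

def lift {K : Type*} [Group K] (f : ∀ v, G v →* K)
    (hf : ∀ v w, Γ.Adj v w → ∀ (g : G v) (h : G w), Commute (f v g) (f w h)) :
    GraphProduct Γ G →* K :=
  QuotientGroup.lift _ (CoprodI.lift f) <| Subgroup.normalClosure_le_normal <| by
    rintro _ ⟨v, w, hvw, g, h, rfl⟩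
    simpa [commutatorElement_def] using
      commutatorElement_eq_one_iff_commute.mpr (hf v w hvw g h)

@[simp]
theorem lift_of {K : Type*} [Group K] (f : ∀ v, G v →* K)
    (hf : ∀ v w, Γ.Adj v w → ∀ (g : G v) (h : G w), Commute (f v g) (f w h))
    {v : V} (g : G v) : lift f hf (of Γ G g) = f v g :=
  CoprodI.lift_of f g

end GraphProduct

section Components

variable {Γ : SimpleGraph V}

theorem IsCompOf.subset {S C : Set V} (h : IsCompOf Γ S C) : C ⊆ S := by
  obtain ⟨c, rfl⟩ := h
  rintro _ ⟨x, -, rfl⟩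
  exact x.2

theorem IsCompOf.nonempty {S C : Set V} (h : IsCompOf Γ S C) : C.Nonempty := by
  obtain ⟨c, rfl⟩ := h
  induction c using SimpleGraph.ConnectedComponent.ind with
  | h x => exact ⟨x, x, rfl, rfl⟩

theorem IsCompOf.eq_of_mem {S C D : Set V} (hC : IsCompOf Γ S C) (hD : IsCompOf Γ S D)
    {u : V} (huC : u ∈ C) (huD : u ∈ D) : C = D := by
  obtain ⟨c, rfl⟩ := hC
  obtain ⟨d, rfl⟩ := hD
  obtain ⟨x, hx, rfl⟩ := huC
  obtain ⟨y, hy, hxy⟩ := huD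
  rw [Subtype.ext hxy] at hy
  rw [SimpleGraph.ConnectedComponent.mem_supp_iff] at hx hy
  rw [← hx, ← hy]

theorem exists_isCompOf_mem {S : Set V} {u : V} (hu : u ∈ S) :
    ∃ C : Set V, IsCompOf Γ S C ∧ u ∈ C :=
  ⟨_, ⟨(Γ.induce S).connectedComponentMk ⟨u, hu⟩, rfl⟩, ⟨u, hu⟩, rfl, rfl⟩

theorem ne_of_not_mem_star {v u : V} (hu : u ∉ star Γ v) : u ≠ v :=
  fun h => hu (h ▸ Set.mem_insert u _)

namespace TV

theorem vertex_not_mem (p : TV Γ) : p.1.1 ∉ p.1.2 :=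
  fun h => p.2.subset h (Set.mem_insert _ _)

theorem eq_of_mem {p q : TV Γ} (hpq : p.1.1 = q.1.1) {u : V} (hp : u ∈ p.1.2)
    (hq : u ∈ q.1.2) : p = q :=
  Subtype.ext <| Prod.ext hpq <| (hpq ▸ p.2 : IsCompOf Γ _ p.1.2).eq_of_mem q.2 hp hq

theorem disjoint_of_ne {p q : TV Γ} (hpq : p.1.1 = q.1.1) (hne : p ≠ q) :
    Disjoint p.1.2 q.1.2 :=
  Set.disjoint_left.mpr fun _ hp hq => hne (eq_of_mem hpq hp hq)

theorem exists_mem_of_not_mem_star {v u : V} (hu : u ∉ star Γ v) :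
    ∃ p : TV Γ, p.1.1 = v ∧ u ∈ p.1.2 :=
  let ⟨C, hC, huC⟩ := exists_isCompOf_mem (Γ := Γ) (S := (star Γ v)ᶜ) hu
  ⟨⟨(v, C), hC⟩, rfl, huC⟩

end TV

end Components

section PartialConj

variable {Γ : SimpleGraph V} {G : V → Type uG} [∀ v, Group (G v)] {v : V} {a b : G v}
  {π π₁ π₂ : MulAut (GraphProduct Γ G)} {C D : Set V}

theorem IsPartialConjBy.mul (h₁ : IsPartialConjBy Γ G a π₁ C) (h₂ : IsPartialConjBy Γ G b π₂ C)
    (hv : v ∉ C) : IsPartialConjBy Γ G (b * a) (π₁ * π₂) C := by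
  refine ⟨fun u hu g => ?_, fun u hu g => ?_⟩
  · simp [h₂.1 u hu g, h₁.1 u hu g, h₁.2 v hv, mul_assoc]
  · simp [h₂.2 u hu g, h₁.2 u hu g]

theorem IsPartialConjBy.inv (h : IsPartialConjBy Γ G a π C) (hv : v ∉ C) :
    IsPartialConjBy Γ G a⁻¹ π⁻¹ C := by
  refine ⟨fun u hu g => ?_, fun u hu g => ?_⟩
  · rw [MulAut.inv_apply, MulEquiv.symm_apply_eq]
    simp [h.1 u hu g, h.2 v hv, mul_assoc]
  · rw [MulAut.inv_apply, MulEquiv.symm_apply_eq, h.2 u hu g]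

theorem IsPartialConjBy.zpow (h : IsPartialConjBy Γ G a π C) (hv : v ∉ C) (m : ℤ) :
    IsPartialConjBy Γ G (a ^ m) (π ^ m) C := by
  induction m using Int.induction_on with
  | zero => exact ⟨fun _ _ _ => by simp, fun _ _ _ => rfl⟩
  | succ n ih =>
    rw [zpow_add_one, zpow_add_one, (Commute.zpow_self a n).eq]
    exact ih.mul h hv
  | pred n ih =>
    rw [zpow_sub_one, zpow_sub_one, (Commute.zpow_self a (-n)).inv_right.eq]
    exact ih.mul (h.inv hv) hv

theorem IsPartialConjBy.mul_of_disjoint (h₁ : IsPartialConjBy Γ G a π₁ C)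
    (h₂ : IsPartialConjBy Γ G a π₂ D) (hv : v ∉ C) (hCD : Disjoint C D) :
    IsPartialConjBy Γ G a (π₁ * π₂) (C ∪ D) := by
  refine ⟨fun u hu g => ?_, fun u hu g => ?_⟩
  · rcases hu with hu | hu
    · simp [h₂.2 u (Set.disjoint_left.mp hCD hu) g, h₁.1 u hu g]
    · simp [h₂.1 u hu g, h₁.2 u (Set.disjoint_right.mp hCD hu) g, h₁.2 v hv]
  · rw [Set.mem_union, not_or] at hu
    simp [h₂.2 u hu.2 g, h₁.2 u hu.1 g]

theorem IsPartialConjBy.list_prod {ι : Type*} {σ : ι → MulAut (GraphProduct Γ G)}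
    {S : ι → Set V} {l : List ι} (h : ∀ i ∈ l, IsPartialConjBy Γ G a (σ i) (S i))
    (hv : ∀ i ∈ l, v ∉ S i) (hdisj : l.Pairwise fun i j => Disjoint (S i) (S j)) :
    IsPartialConjBy Γ G a (l.map σ).prod {u | ∃ i ∈ l, u ∈ S i} := by
  induction l with
  | nil => exact ⟨fun _ hu => by simp at hu, fun _ _ _ => rfl⟩
  | cons i l ih =>
    rw [List.pairwise_cons] at hdisj
    have hS : {u | ∃ j ∈ i :: l, u ∈ S j} = S i ∪ {u | ∃ j ∈ l, u ∈ S j} := by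
      ext; simp
    rw [List.map_cons, List.prod_cons, hS]
    refine (h i List.mem_cons_self).mul_of_disjoint
      (ih (fun j hj => h j (List.mem_cons_of_mem i hj))
        (fun j hj => hv j (List.mem_cons_of_mem i hj)) hdisj.2) (hv i List.mem_cons_self) ?_
    exact Set.disjoint_left.mpr fun u hu ⟨j, hj, huj⟩ =>
      Set.disjoint_left.mp (hdisj.1 j hj) hu huj

theorem IsPartialConjBy.eq_conj (h : IsPartialConjBy Γ G a π C) (hC : (star Γ v)ᶜ ⊆ C)
    (ha : ∀ g : G v, Commute a g) : π = MulAut.conj (of Γ G a) := by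
  refine GraphProduct.mulAut_ext fun u g => ?_
  by_cases hu : u ∈ C
  · exact h.1 u hu g
  have hcomm : Commute (of Γ G a) (of Γ G g) := by
    rcases not_not.mp (mt (@hC u) hu) with rfl | hadj
    · exact (ha g).map _
    · exact of_commute Γ G hadj a g
  simp [h.2 u hu g, hcomm.eq]

end PartialConj

namespace RegularWreathProduct

variable {D Q : Type*} [Group D] [Group Q] [DecidableEq Q]

def single : D →* D ≀ᵣ Q where
  toFun d := ⟨Pi.mulSingle 1 d, 1⟩
  map_one' := by ext <;> simp
  map_mul' d e := by ext x <;> simp [Pi.mulSingle_mul]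

@[simp]
theorem right_single (d : D) : (single d : D ≀ᵣ Q).right = 1 := rfl

theorem right_eq_one_of_commute_single {d : D} (hd : d ≠ 1) {w : D ≀ᵣ Q}
    (h : Commute w (single d)) : w.right = 1 := by
  by_contra hw
  have := congrFun (congrArg RegularWreathProduct.left h.eq) w.right
  simp [single, Pi.mulSingle_apply, hw] at this
  exact hd this

end RegularWreathProduct

namespace GraphProduct

variable {Γ : SimpleGraph V} {G : V → Type uG} [∀ v, Group (G v)]

theorem commute_of_eq_one_or {K : Type*} [Group K] {f : ∀ v, G v →* K} {v w : V}
    (h : f v = 1 ∨ f w = 1) (g : G v) (g' : G w) : Commute (f v g) (f w g') := by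
  rcases h with h | h <;> simp [h]

open scoped Classical in
noncomputable def proj (Γ : SimpleGraph V) (G : V → Type uG) [∀ v, Group (G v)] (v : V) :
    GraphProduct Γ G →* G v :=
  lift (Function.update 1 v (MonoidHom.id (G v))) fun a b hab =>
    commute_of_eq_one_or <| by
      by_cases ha : a = v
      · exact .inr (Function.update_of_ne (ha ▸ hab.ne.symm) _ _)
      · exact .inl (Function.update_of_ne ha _ _)

@[simp]
theorem proj_of_self {v : V} (g : G v) : proj Γ G v (of Γ G g) = g := by
  simp [proj]

theorem proj_of_of_ne {v w : V} (h : w ≠ v) (g : G w) : proj Γ G v (of Γ G g) = 1 := by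
  classical
  simp [proj, Function.update_of_ne h]

open scoped Classical in
noncomputable def wreathRetraction (Γ : SimpleGraph V) (G : V → Type uG) [∀ v, Group (G v)]
    (v u : V) (hu : u ∉ star Γ v) : GraphProduct Γ G →* G u ≀ᵣ G v :=
  lift (Function.update (Function.update 1 v RegularWreathProduct.inl) u
      RegularWreathProduct.single) fun a b hab =>
    commute_of_eq_one_or <| by
      simp only [star, Set.mem_insert_iff, SimpleGraph.mem_neighborSet, not_or] at hu
      by_cases ha : a = v ∨ a = u
      · have hb : b ≠ u ∧ b ≠ v := by
          rcases ha with rfl | rfl <;> constructor <;> rintro rfl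
          exacts [hu.2 hab, hab.ne rfl, hab.ne rfl, hu.2 hab.symm]
        exact .inr <| by rw [Function.update_of_ne hb.1, Function.update_of_ne hb.2]; rfl
      · rw [not_or] at ha
        exact .inl <| by rw [Function.update_of_ne ha.2, Function.update_of_ne ha.1]; rfl

variable {v u : V} (hu : u ∉ star Γ v)

@[simp]
theorem wreathRetraction_of_left (g : G v) :
    wreathRetraction Γ G v u hu (of Γ G g) = RegularWreathProduct.inl g := by
  classical
  simp [wreathRetraction, Function.update_of_ne (ne_of_not_mem_star hu).symm]

open scoped Classical in
@[simp]
theorem wreathRetraction_of_right (g : G u) :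
    wreathRetraction Γ G v u hu (of Γ G g) = RegularWreathProduct.single g := by
  simp [wreathRetraction]

theorem wreathRetraction_of_of_ne {w : V} (hv : w ≠ v) (hu' : w ≠ u) (g : G w) :
    wreathRetraction Γ G v u hu (of Γ G g) = 1 := by
  classical
  simp [wreathRetraction, Function.update_of_ne hv, Function.update_of_ne hu']

@[simp]
theorem right_wreathRetraction (x : GraphProduct Γ G) :
    (wreathRetraction Γ G v u hu x).right = proj Γ G v x := by
  change (RegularWreathProduct.rightHom.comp (wreathRetraction Γ G v u hu)) x = _
  congr 1
  refine hom_ext fun w g => ?_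
  by_cases hv : w = v
  · subst hv; simp
  by_cases hu' : w = u
  · subst hu'; simp [proj_of_of_ne hv]
  · simp [wreathRetraction_of_of_ne hu hv hu', proj_of_of_ne hv]

end GraphProduct

theorem map_list_prod_apply {ι Gp K : Type*} [Group Gp] [Group K] (ρ : Gp →* K)
    {σ : ι → MulAut Gp} {t : ι → K} {l : List ι}
    (h : ∀ i ∈ l, ∀ x, ρ (σ i x) = MulAut.conj (t i) (ρ x)) (x : Gp) :
    ρ ((l.map σ).prod x) = MulAut.conj (l.map t).prod (ρ x) := by
  induction l with
  | nil => simp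
  | cons i l ih =>
    simp only [List.map_cons, List.prod_cons, MulAut.mul_apply, map_mul,
      h i List.mem_cons_self, ih fun j hj => h j (List.mem_cons_of_mem i hj)]

theorem commute_inv_mul_of_conj_eq {K : Type*} [Group K] {x y s : K}
    (h : MulAut.conj x s = MulAut.conj y s) : Commute (x⁻¹ * y) s := by
  rw [MulAut.conj_apply, MulAut.conj_apply] at h
  calc x⁻¹ * y * s = x⁻¹ * (y * s * y⁻¹) * y := by group
    _ = s * (x⁻¹ * y) := by rw [← h]; group

section Forward

variable {Γ : SimpleGraph V} {G : V → Type uG} [∀ v, Group (G v)] {w : V} {a : G w}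
  {π : MulAut (GraphProduct Γ G)} {C : Set V}

open GraphProduct

theorem IsPartialConjBy.map_apply {K : Type*} [Group K] (h : IsPartialConjBy Γ G a π C)
    (ρ : GraphProduct Γ G →* K) (t : K)
    (hin : ∀ u ∈ C, ∀ g : G u,
      MulAut.conj t (ρ (of Γ G g)) = MulAut.conj (ρ (of Γ G a)) (ρ (of Γ G g)))
    (hout : ∀ u ∉ C, ∀ g : G u, Commute t (ρ (of Γ G g))) (x : GraphProduct Γ G) :
    ρ (π x) = MulAut.conj t (ρ x) := by
  suffices ρ.comp π.toMonoidHom = (MulAut.conj t).toMonoidHom.comp ρ from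
    DFunLike.congr_fun this x
  refine hom_ext fun u g => ?_
  by_cases hu : u ∈ C
  · simpa [h.1 u hu g] using (hin u hu g).symm
  · simp [h.2 u hu g, (hout u hu g).eq]

open scoped Classical in
theorem IsPartialConjBy.wreathRetraction_apply (hcomm : ∀ w (x y : G w), Commute x y)
    (h : IsPartialConjBy Γ G a π C) (hw : w ∉ C) {v u : V} (hu : u ∉ star Γ v)
    (x : GraphProduct Γ G) :
    wreathRetraction Γ G v u hu (π x) = MulAut.conj
      (if v ∈ C ∨ u ∈ C then wreathRetraction Γ G v u hu (of Γ G a) else 1)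
      (wreathRetraction Γ G v u hu x) := by
  have hkill : ∀ {w'}, w' ∉ ({v, u} : Set V) → ∀ g : G w',
      wreathRetraction Γ G v u hu (of Γ G g) = 1 := fun hw' g => by
    simp only [Set.mem_insert_iff, Set.mem_singleton_iff, not_or] at hw'
    exact wreathRetraction_of_of_ne hu hw'.1 hw'.2 g
  refine h.map_apply _ _ (fun w' hw' g => ?_) (fun w' hw' g => ?_) x
  · split_ifs with hvu
    · rfl
    · rw [hkill (by grind) g]; simp
  · split_ifs with hvu
    · by_cases hww' : w = w'
      · subst hww'; exact (hcomm w a g).map ((wreathRetraction Γ G v u hu).comp (of Γ G))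
      · have : w ∉ ({v, u} : Set V) ∨ w' ∉ ({v, u} : Set V) := by grind
        rcases this with h' | h'
        · rw [hkill h']; exact Commute.one_left _
        · rw [hkill h']; exact Commute.one_right _
    · exact Commute.one_left _

theorem proj_eq_of_list_prod_eq_conj (hcomm : ∀ w (x y : G w), Commute x y)
    [∀ v, Nontrivial (G v)] {σ : TV Γ → MulAut (GraphProduct Γ G)} {a : ∀ p : TV Γ, G p.1.1}
    (hσ : ∀ p, IsPartialConjBy Γ G (a p) (σ p) p.1.2) {L : List (TV Γ)} (hnd : L.Nodup)
    {z : GraphProduct Γ G} (hz : (L.map σ).prod = MulAut.conj z) {p : TV Γ} (hp : p ∈ L) :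
    proj Γ G p.1.1 z = a p := by
  classical
  obtain ⟨u, hpu⟩ := p.2.nonempty
  have hu : u ∉ star Γ p.1.1 := p.2.subset hpu
  set ρ := wreathRetraction Γ G p.1.1 u hu
  set t : TV Γ → G u ≀ᵣ G p.1.1 := fun q =>
    if p.1.1 ∈ q.1.2 ∨ u ∈ q.1.2 then ρ (of Γ G (a q)) else 1 with ht
  have hconj (x) : ρ (MulAut.conj z x) = MulAut.conj (L.map t).prod (ρ x) := by
    rw [← hz]
    exact map_list_prod_apply ρ
      (fun q _ => (hσ q).wreathRetraction_apply hcomm q.vertex_not_mem hu) x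
  obtain ⟨d, hd⟩ := exists_ne (1 : G u)
  have hright : proj Γ G p.1.1 z = ((L.map t).prod).right := by
    have := RegularWreathProduct.right_eq_one_of_commute_single hd
      (commute_inv_mul_of_conj_eq (by simpa [ρ] using hconj (of Γ G d)))
    simpa [inv_mul_eq_one, ρ] using this
  have htq : ∀ q ≠ p, q ∈ L → (t q).right = 1 := by
    intro q hqp _
    simp only [ht]
    split_ifs with hq
    · rw [right_wreathRetraction]
      by_cases hqv : q.1.1 = p.1.1
      · refine hq.elim (fun h => (q.vertex_not_mem (hqv ▸ h)).elim) fun h => ?_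
        exact (hqp (TV.eq_of_mem hqv h hpu)).elim
      · exact proj_of_of_ne hqv _
    · rfl
  calc proj Γ G p.1.1 z = (L.map fun q => (t q).right).prod := by
        rw [hright, ← RegularWreathProduct.rightHom_eq_right, map_list_prod, List.map_map]
        rfl
    _ = a p := by
      rw [List.prod_map_eq_pow_single p _ htq, List.count_eq_one_of_mem hnd hp, pow_one]
      simp [ht, hpu, ρ]

end Forward

/-- Each fibre of `f` is a contiguous block of `l`. -/
def IsGroupedBy {α β : Type*} (f : α → β) (l : List α) : Prop :=
  ∀ a b c, [a, b, c].Sublist l → f a = f c → f b = f a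

theorem IsGroupedBy.sublist {α β : Type*} {f : α → β} {l l' : List α} (h : IsGroupedBy f l')
    (hl : l.Sublist l') : IsGroupedBy f l :=
  fun a b c habc => h a b c (habc.trans hl)

theorem isGroupedBy_of_get {α β : Type*} {f : α → β} {l : List α}
    (h : ∀ i j m : Fin l.length, (i : ℕ) < j → (j : ℕ) < m →
      f (l.get i) = f (l.get m) → f (l.get j) = f (l.get i)) : IsGroupedBy f l := by
  intro a b c habc hac
  obtain ⟨e, he⟩ := List.sublist_iff_exists_fin_orderEmbedding_get_eq.mp habc
  have ha : a = l[e 0] := he 0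
  have hb : b = l[e 1] := he 1
  have hc : c = l[e 2] := he 2
  rw [ha, hc] at hac
  rw [ha, hb]
  exact h (e 0) (e 1) (e 2) (e.strictMono (by simp)) (e.strictMono (by simp [Fin.lt_def]))
    hac

section Backward

variable {Γ : SimpleGraph V} {G : V → Type uG} [∀ v, Group (G v)]
  {σ : TV Γ → MulAut (GraphProduct Γ G)}

open scoped Classical in
theorem list_prod_filter_eq_conj (hcomm : ∀ w (x y : G w), Commute x y)
    {a : ∀ p : TV Γ, G p.1.1}
    (hσ : ∀ p q : TV Γ, p.1.1 = q.1.1 → IsPartialConjBy Γ G (a p) (σ q) q.1.2)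
    (p : TV Γ) {L : List (TV Γ)} (hnd : L.Nodup) (hcompl : ∀ q : TV Γ, q.1.1 = p.1.1 → q ∈ L) :
    ((L.filter fun q => q.1.1 = p.1.1).map σ).prod = MulAut.conj (of Γ G (a p)) := by
  have hmem (q : TV Γ) : q ∈ L.filter (fun q => q.1.1 = p.1.1) ↔ q.1.1 = p.1.1 := by
    simpa using fun h => hcompl q h
  refine (IsPartialConjBy.list_prod (fun q hq => hσ p q ((hmem q).1 hq).symm)
    (fun q hq => (hmem q).1 hq ▸ q.vertex_not_mem)
    ((hnd.filter _).pairwise_of_forall_ne fun q hq r hr =>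
      TV.disjoint_of_ne (((hmem q).1 hq).trans ((hmem r).1 hr).symm))).eq_conj
    (fun u hu => ?_) (hcomm _ (a p))
  obtain ⟨q, hqv, huq⟩ := TV.exists_mem_of_not_mem_star hu
  exact ⟨q, (hmem q).2 hqv, huq⟩

/- Every block after the first contains all components of its vertex, so it multiplies to an
inner automorphism. -/
open scoped Classical in
theorem exists_list_prod_eq_prod_filter_mul_conj (hcomm : ∀ w (x y : G w), Commute x y)
    {a : ∀ p : TV Γ, G p.1.1}
    (hσ : ∀ p q : TV Γ, p.1.1 = q.1.1 → IsPartialConjBy Γ G (a p) (σ q) q.1.2)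
    (p : TV Γ) (L : List (TV Γ)) (hnd : (p :: L).Nodup)
    (hgr : IsGroupedBy (fun q : TV Γ => q.1.1) (p :: L))
    (hclosed : ∀ q ∈ p :: L, q.1.1 ≠ p.1.1 → ∀ r : TV Γ, r.1.1 = q.1.1 → r ∈ p :: L) :
    ∃ z, ((p :: L).map σ).prod =
      (((p :: L).filter fun q => q.1.1 = p.1.1).map σ).prod * MulAut.conj z := by
  induction L generalizing p with
  | nil => exact ⟨1, by simp⟩
  | cons p' L ih =>
    have hnot : p'.1.1 ≠ p.1.1 → ∀ q ∈ p' :: L, q.1.1 ≠ p.1.1 := by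
      intro hv q hq hqp
      rcases List.mem_cons.mp hq with rfl | hq
      · exact hv hqp
      · exact hv <| hgr p p' q ((List.singleton_sublist.mpr hq).cons_cons p' |>.cons_cons p)
          hqp.symm
    have hclosed' :
        ∀ q ∈ p' :: L, q.1.1 ≠ p'.1.1 → ∀ r : TV Γ, r.1.1 = q.1.1 → r ∈ p' :: L := by
      intro q hq hqv r hr
      have hqp : q.1.1 ≠ p.1.1 := by
        by_cases hv : p'.1.1 = p.1.1
        · exact hv ▸ hqv
        · exact hnot hv q hq
      rcases List.mem_cons.mp (hclosed q (List.mem_cons_of_mem p hq) hqp r hr) with rfl | h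
      · exact absurd hr.symm hqp
      · exact h
    obtain ⟨z, hz⟩ := ih p' hnd.of_cons (hgr.sublist (List.sublist_cons_self p _)) hclosed'
    by_cases hv : p'.1.1 = p.1.1
    · refine ⟨z, ?_⟩
      simp only [hv] at hz
      rw [List.map_cons, List.prod_cons, hz]
      simp [hv, mul_assoc]
    · have hblock := list_prod_filter_eq_conj hcomm hσ p' hnd.of_cons fun q hq => by
        rcases List.mem_cons.mp (hclosed p' (by simp) hv q hq) with rfl | h
        · exact absurd hq.symm hv
        · exact h
      refine ⟨of Γ G (a p') * z, ?_⟩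
      rw [List.map_cons, List.prod_cons, hz, hblock, List.filter_cons_of_pos (by simp),
        List.filter_eq_nil_iff.mpr fun q hq => by simpa using hnot hv q hq]
      simp

open scoped Classical in
theorem exists_list_prod_eq_conj (hcomm : ∀ w (x y : G w), Commute x y)
    {a : ∀ p : TV Γ, G p.1.1}
    (hσ : ∀ p q : TV Γ, p.1.1 = q.1.1 → IsPartialConjBy Γ G (a p) (σ q) q.1.2)
    {L : List (TV Γ)} (hnd : L.Nodup) (hgr : IsGroupedBy (fun q : TV Γ => q.1.1) L)
    (hall : ∀ p, p ∈ L) : ∃ z, (L.map σ).prod = MulAut.conj z := by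
  cases L with
  | nil => exact ⟨1, by simp⟩
  | cons p L =>
    obtain ⟨z, hz⟩ := exists_list_prod_eq_prod_filter_mul_conj hcomm hσ p L hnd hgr
      fun _ _ _ r _ => hall r
    refine ⟨of Γ G (a p) * z, ?_⟩
    rw [hz, list_prod_filter_eq_conj hcomm hσ p hnd fun q _ => hall q, map_mul]

end Backward

theorem product_inner_iff_congruent_general {V : Type u} (Γ : SimpleGraph V)
    (G : V → Type uG) [∀ v, Group (G v)] [∀ v, Nontrivial (G v)]
    (gen : ∀ v, G v) (hgen : ∀ v, Subgroup.zpowers (gen v) = ⊤)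
    (πfam : TV Γ → MulAut (GraphProduct Γ G))
    (hπ : ∀ p : TV Γ, IsPartialConj Γ G gen (πfam p) p.1.1 p.1.2)
    (k : TV Γ → ℤ)
    (L : List (TV Γ)) (hnd : L.Nodup) (hall : ∀ p : TV Γ, p ∈ L)
    (hgrouped : ∀ i j m : Fin L.length, (i : ℕ) < j → (j : ℕ) < m →
      (L.get i).1.1 = (L.get m).1.1 → (L.get j).1.1 = (L.get i).1.1) :
    (L.map fun p => πfam p ^ k p).prod ∈
        (MulAut.conj : GraphProduct Γ G →* MulAut (GraphProduct Γ G)).range ↔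
      ∀ p q : TV Γ, p.1.1 = q.1.1 → k p ≡ k q [ZMOD (Nat.card (G p.1.1))] := by
  have hcomm (v : V) : ∀ x y : G v, Commute x y := commute_of_zpowers_eq_top (hgen v)
  have hpow (p : TV Γ) : IsPartialConjBy Γ G (gen p.1.1 ^ k p) (πfam p ^ k p) p.1.2 :=
    IsPartialConjBy.zpow (hπ p) p.vertex_not_mem (k p)
  rw [MonoidHom.mem_range]
  constructor
  · rintro ⟨z, hz⟩ p q hpq
    have hp := proj_eq_of_list_prod_eq_conj hcomm hpow hnd hz.symm (hall p)
    have hq := proj_eq_of_list_prod_eq_conj hcomm hpow hnd hz.symm (hall q)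
    rw [← hpq] at hq
    exact (zpow_eq_zpow_iff_modEq_card (hgen _)).mp (hp.symm.trans hq)
  · intro hcong
    have hσ (p q : TV Γ) (hpq : p.1.1 = q.1.1) :
        IsPartialConjBy Γ G (gen p.1.1 ^ k p) (πfam q ^ k q) q.1.2 := by
      have := hpow q
      rwa [← hpq, ← (zpow_eq_zpow_iff_modEq_card (hgen _)).mpr (hcong p q hpq)] at this
    obtain ⟨z, hz⟩ := exists_list_prod_eq_conj hcomm hσ hnd (isGroupedBy_of_get hgrouped) hall
    exact ⟨z, hz.symm⟩

/-- For a finite connected graph with no SIL, a product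
`∏_i ∏_C π_{v_i,C}^{k_{v_i,C}}` (taken along an enumeration `L` of all pairs `(v,C)`
grouped by vertex) is an inner automorphism of `G_Γ` if and only if for each vertex the
exponents are congruent modulo the order of the vertex group. -/
theorem product_inner_iff_congruent {V : Type u} [Finite V] (Γ : SimpleGraph V)
    (hconn : Γ.Connected) (hsil : ¬ HasSIL Γ)
    (G : V → Type uG) [∀ v, Group (G v)] [∀ v, Nontrivial (G v)]
    (gen : ∀ v, G v) (hgen : ∀ v, Subgroup.zpowers (gen v) = ⊤)
    (πfam : TV Γ → MulAut (GraphProduct Γ G))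
    (hπ : ∀ p : TV Γ, IsPartialConj Γ G gen (πfam p) p.1.1 p.1.2)
    (k : TV Γ → ℤ)
    (L : List (TV Γ)) (hnd : L.Nodup) (hall : ∀ p : TV Γ, p ∈ L)
    (hgrouped : ∀ i j m : Fin L.length, (i : ℕ) < j → (j : ℕ) < m →
      (L.get i).1.1 = (L.get m).1.1 → (L.get j).1.1 = (L.get i).1.1) :
    (L.map fun p => πfam p ^ k p).prod ∈
        (MulAut.conj : GraphProduct Γ G →* MulAut (GraphProduct Γ G)).range ↔
      ∀ p q : TV Γ, p.1.1 = q.1.1 → k p ≡ k q [ZMOD (Nat.card (G p.1.1))] :=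
  product_inner_iff_congruent_general Γ G gen hgen πfam hπ k L hnd hall hgrouped

end ArXiv
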